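/- arXiv:2603.00571 — 3 statements merged into one kernel-verified Lean document; each statement's English description precedes it below -/
import Mathlib

section
/- Let k be a positive integer with α = k^{1/3} irrational. Let p, q be positive integers, q ≥ 2, with |α - p/q| < 1/q², and set x = p/q, d = |p³ - k q³|, and suppose x > α. Let c ∈ [0, 1) (representing q_{n-1}/q_n). Then R := -(q/d)(2x² - xα - α²) - c satisfies -1 - 1/q² < R < 0; in particular if additionally (2x+α)/(q²(x²+xα+α²)) + c < 1 then |R| < 1. -/
/-- Bounds for the cubic remainder term `R = -V - c` for convergents from above. -/
theorem cubic_remainder_bounds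
    (k p q : ℕ) (hk : 0 < k) (hp : 0 < p) (hq : 2 ≤ q)
    (α x d c R : ℝ)
    (hα : α = (k : ℝ) ^ ((1 : ℝ) / 3))
    (hirr : Irrational α)
    (hx : x = (p : ℝ) / q)
    (happrox : |α - x| < 1 / (q : ℝ) ^ 2)
    (hxα : α < x)
    (hd : d = |(p : ℝ) ^ 3 - (k : ℝ) * (q : ℝ) ^ 3|)
    (hc0 : 0 ≤ c) (hc1 : c < 1)
    (hR : R = -(((q : ℝ) / d) * (2 * x ^ 2 - x * α - α ^ 2)) - c) :
    (-1 - 1 / (q : ℝ) ^ 2 < R ∧ R < 0) ∧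
      ((2 * x + α) / ((q : ℝ) ^ 2 * (x ^ 2 + x * α + α ^ 2)) + c < 1 → |R| < 1) := by
  have hq0 : (0:ℝ) < (q:ℝ) := by
    have : (2:ℝ) ≤ (q:ℝ) := by exact_mod_cast hq
    linarith
  have hk1 : (1:ℝ) ≤ (k:ℝ) := by exact_mod_cast hk
  have hα0 : 0 < α := by
    rw [hα]; exact Real.rpow_pos_of_pos (by exact_mod_cast hk) _
  have hα3 : α ^ 3 = (k:ℝ) := by
    rw [hα, ← Real.rpow_natCast ((k:ℝ) ^ ((1:ℝ)/3)) 3,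
      ← Real.rpow_mul (by positivity)]
    norm_num
  have hα1 : 1 ≤ α := by nlinarith [hα0, hk1]
  have hx0 : 0 < x := lt_trans hα0 hxα
  have hp' : (p:ℝ) = x * q := by rw [hx]; field_simp
  have hS : 0 < x ^ 2 + x * α + α ^ 2 := by nlinarith
  have hxa : 0 < x - α := by linarith
  have hdq : d = (q:ℝ) ^ 3 * ((x - α) * (x ^ 2 + x * α + α ^ 2)) := by
    have h1 : (p:ℝ) ^ 3 - (k:ℝ) * (q:ℝ) ^ 3
        = (q:ℝ) ^ 3 * ((x - α) * (x ^ 2 + x * α + α ^ 2)) := by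
      rw [hp', ← hα3]; ring
    rw [hd, h1, abs_of_pos]
    positivity
  have hd0 : 0 < d := by rw [hdq]; positivity
  have hV : ((q:ℝ) / d) * (2 * x ^ 2 - x * α - α ^ 2)
      = (2 * x + α) / ((q:ℝ) ^ 2 * (x ^ 2 + x * α + α ^ 2)) := by
    rw [hdq]
    field_simp
    ring
  have hVpos : 0 < (2 * x + α) / ((q:ℝ) ^ 2 * (x ^ 2 + x * α + α ^ 2)) := by
    apply div_pos (by linarith) (by positivity)
  have hVle : (2 * x + α) / ((q:ℝ) ^ 2 * (x ^ 2 + x * α + α ^ 2)) ≤ 1 / (q:ℝ) ^ 2 := by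
    rw [div_le_div_iff₀ (by positivity) (by positivity)]
    have h1 : 0 ≤ α * (x - 1) := mul_nonneg (by linarith) (by linarith)
    have h2 : 2 * x + α ≤ x ^ 2 + x * α + α ^ 2 := by nlinarith [sq_nonneg (x - 1)]
    calc (2 * x + α) * (q:ℝ) ^ 2 = (q:ℝ) ^ 2 * (2 * x + α) := by ring
      _ ≤ (q:ℝ) ^ 2 * (x ^ 2 + x * α + α ^ 2) :=
          mul_le_mul_of_nonneg_left h2 (sq_nonneg _)
      _ = 1 * ((q:ℝ) ^ 2 * (x ^ 2 + x * α + α ^ 2)) := by ring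
  rw [hR, hV]
  set V := (2 * x + α) / ((q:ℝ) ^ 2 * (x ^ 2 + x * α + α ^ 2)) with hVdef
  refine ⟨⟨by linarith, by linarith⟩, fun h => ?_⟩
  rw [abs_lt]
  constructor <;> linarith
end

section
/- For α = 50^{1/10} with convergent p₁/q₁ = 3/2, the remainder R₁ = θ₂ - H₁ satisfies |R₁| > 1, where θ₂ = 1/(q₁(q₁α - p₁)) - q₀/q₁ with q₀ = 1 is the complete quotient and H₁ = 10·3^9/(7849·2). Hence the bound |R_n| < 1 fails for degree m = 10 at q = 2. -/
/-- For `α = 50^(1/10)` at the convergent `3/2`, the remainder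
`R₁ = θ₂ - H₁` has absolute value exceeding `1`. -/
theorem counterexample_remainder :
    |(1 / (2 * (2 * (50 : ℝ) ^ ((1 : ℝ) / 10) - 3)) - 1 / 2)
      - 10 * 3 ^ 9 / (7849 * 2)| > 1 := by
  set x : ℝ := (50 : ℝ) ^ ((1 : ℝ) / 10) with hx
  have hx10 : x ^ (10 : ℕ) = 50 := by
    rw [hx, ← Real.rpow_natCast _ 10, ← Real.rpow_mul (by norm_num)]
    norm_num
  have hxpos : 0 < x := Real.rpow_pos_of_pos (by norm_num) _
  have hlt : x < 3 / 2 := by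
    by_contra h
    push_neg at h
    have : (3 / 2 : ℝ) ^ (10 : ℕ) ≤ x ^ (10 : ℕ) :=
      pow_le_pow_left₀ (by norm_num) h 10
    rw [hx10] at this
    norm_num at this
  have hneg : 2 * (2 * x - 3) < 0 := by linarith
  have h1 : 1 / (2 * (2 * x - 3)) < 0 := one_div_neg.mpr hneg
  have h2 : (1 / 2 : ℝ) + 10 * 3 ^ 9 / (7849 * 2) > 1 := by norm_num
  have : (1 / (2 * (2 * x - 3)) - 1 / 2) - 10 * 3 ^ 9 / (7849 * 2) < -1 := by
    linarith
  rw [abs_of_neg (by linarith)]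
  linarith
end

section
/- Let m ≥ 3, k a positive integer such that α = k^{1/m} is irrational, and suppose p, q are positive integers with |α - p/q| < 1/q² and p/q > α. Set x = p/q, d = |p^m - k q^m|, and V = (q^{m-2}/d)(m x^{m-1} - Σ_{j=0}^{m-1} x^j α^{m-1-j}). Then there is a constant K depending only on m and α (not on p, q) such that 0 < V ≤ K/q² for all such p, q with x ≤ α + 1. -/
/-- Elementary bound: for `0 < α ≤ x`, `x^n - α^n ≤ n x^{n-1} (x - α)`. -/
lemma aux_pow_sub_pow_le {x α : ℝ} (hα0 : 0 < α) (hax : α ≤ x) (n : ℕ) :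
    x ^ n - α ^ n ≤ (n : ℝ) * x ^ (n - 1) * (x - α) := by
  rcases Nat.eq_zero_or_pos n with h | h
  · simp [h]
  have hx0 : 0 < x := lt_of_lt_of_le hα0 hax
  rw [← geom_sum₂_mul x α n]
  have hsum : (∑ i ∈ Finset.range n, x ^ i * α ^ (n - 1 - i)) ≤ (n : ℝ) * x ^ (n - 1) := by
    calc (∑ i ∈ Finset.range n, x ^ i * α ^ (n - 1 - i))
        ≤ ∑ _i ∈ Finset.range n, x ^ (n - 1) := by
          apply Finset.sum_le_sum
          intro i hi
          have hi' : i < n := Finset.mem_range.mp hi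
          have hsp : x ^ (n - 1) = x ^ i * x ^ (n - 1 - i) := by
            rw [← pow_add]; congr 1; omega
          rw [hsp]
          gcongr
      _ = (n : ℝ) * x ^ (n - 1) := by
          rw [Finset.sum_const, Finset.card_range, nsmul_eq_mul]
  exact mul_le_mul_of_nonneg_right hsum (sub_nonneg.mpr hax)

/-- Uniform `O(q⁻²)` bound for the algebraic correction term `V` in degree `m`,
with a constant depending only on `m` and `α`. -/
theorem correction_term_uniform_bound
    (m k : ℕ) (hm : 3 ≤ m) (hk : 0 < k)
    (α : ℝ) (hα : α = (k : ℝ) ^ ((1 : ℝ) / m)) (hirr : Irrational α) :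
    ∃ K : ℝ, 0 < K ∧ ∀ p q : ℕ, 0 < p → 0 < q →
      ∀ x d V : ℝ, x = (p : ℝ) / q →
        |α - x| < 1 / (q : ℝ) ^ 2 → α < x → x ≤ α + 1 →
        d = |(p : ℝ) ^ m - (k : ℝ) * (q : ℝ) ^ m| →
        V = ((q : ℝ) ^ (m - 2) / d)
              * (m * x ^ (m - 1) - ∑ j ∈ Finset.range m, x ^ j * α ^ (m - 1 - j)) →
        0 < V ∧ V ≤ K / (q : ℝ) ^ 2 := by
  have hm0 : (m : ℝ) ≠ 0 := Nat.cast_ne_zero.mpr (by omega)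
  have hk0 : (0:ℝ) < (k : ℝ) := by exact_mod_cast hk
  have hα0 : 0 < α := by rw [hα]; exact Real.rpow_pos_of_pos hk0 _
  have hαm : α ^ m = (k : ℝ) := by
    rw [hα, ← Real.rpow_natCast ((k:ℝ) ^ ((1:ℝ)/m)) m, ← Real.rpow_mul (le_of_lt hk0),
      one_div, inv_mul_cancel₀ hm0, Real.rpow_one]
  have hm1R : (1:ℝ) < (m:ℝ) := by exact_mod_cast (by omega : 1 < m)
  set K : ℝ := ((m:ℝ) - 1) * (α + 1) ^ (m - 2) / α ^ (m - 1) with hK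
  have hKpos : 0 < K := by
    apply div_pos (mul_pos (by linarith) (by positivity)) (by positivity)
  refine ⟨K, hKpos, ?_⟩
  intro p q hp hq x d V hx hconv hax hx1 hd hV
  set S := ∑ j ∈ Finset.range m, x ^ j * α ^ (m - 1 - j) with hSdef
  have hq0 : (0:ℝ) < (q:ℝ) := by exact_mod_cast hq
  have hx0 : 0 < x := lt_trans hα0 hax
  have hxa : 0 < x - α := sub_pos.mpr hax
  have hpq : (p:ℝ) = x * q := by rw [hx]; field_simp
  have hSpos : 0 < S := by
    apply Finset.sum_pos (fun j _ => by positivity)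
    exact ⟨0, Finset.mem_range.mpr (by omega)⟩
  have hSm : (m:ℝ) * α ^ (m - 1) ≤ S := by
    have hterm : ∀ j ∈ Finset.range m, α ^ (m - 1) ≤ x ^ j * α ^ (m - 1 - j) := by
      intro j hj
      have hj' : j < m := Finset.mem_range.mp hj
      have hsp : α ^ (m - 1) = α ^ j * α ^ (m - 1 - j) := by
        rw [← pow_add]; congr 1; omega
      rw [hsp]
      gcongr
      all_goals first | exact le_of_lt hα0 | exact le_of_lt hax
    calc (m:ℝ) * α ^ (m - 1) = ∑ _j ∈ Finset.range m, α ^ (m - 1) := by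
          rw [Finset.sum_const, Finset.card_range, nsmul_eq_mul]
      _ ≤ S := Finset.sum_le_sum hterm
  have hd' : d = (q:ℝ) ^ m * (S * (x - α)) := by
    rw [hd, hpq, ← hαm, mul_pow, ← sub_mul, ← geom_sum₂_mul x α m, ← hSdef]
    rw [abs_of_nonneg (mul_nonneg (mul_nonneg hSpos.le hxa.le) (pow_nonneg hq0.le m))]
    ring
  have hdpos : 0 < d := by rw [hd']; exact mul_pos (pow_pos hq0 m) (mul_pos hSpos hxa)
  have hqm : (q:ℝ) ^ m = (q:ℝ) ^ (m - 2) * (q:ℝ) ^ 2 := by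
    rw [← pow_add]; congr 1; omega
  set T : ℝ := (m:ℝ) * x ^ (m - 1) - S with hT
  have hV' : V = T / ((q:ℝ) ^ 2 * (S * (x - α))) := by
    rw [hV, hd', hqm]
    have h1 : (q:ℝ) ^ (m - 2) ≠ 0 := by positivity
    have hq0' : (q:ℝ) ≠ 0 := ne_of_gt hq0
    have hS0 : S ≠ 0 := ne_of_gt hSpos
    have hxa0 : x - α ≠ 0 := ne_of_gt hxa
    field_simp
  have hTsum : T = ∑ j ∈ Finset.range m, (x ^ (m - 1) - x ^ j * α ^ (m - 1 - j)) := by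
    rw [hT, hSdef, Finset.sum_sub_distrib, Finset.sum_const, Finset.card_range, nsmul_eq_mul]
  have hTpos : 0 < T := by
    rw [hTsum]
    apply Finset.sum_pos'
    · intro j hj
      have hj' : j < m := Finset.mem_range.mp hj
      have hsp : x ^ (m - 1) = x ^ j * x ^ (m - 1 - j) := by
        rw [← pow_add]; congr 1; omega
      have : x ^ j * α ^ (m - 1 - j) ≤ x ^ (m - 1) := by
        rw [hsp]
        gcongr
        all_goals first | exact le_of_lt hα0 | exact le_of_lt hax
      linarith
    · refine ⟨0, Finset.mem_range.mpr (by omega), ?_⟩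
      simp only [pow_zero, one_mul, Nat.sub_zero]
      have : α ^ (m - 1) < x ^ (m - 1) :=
        pow_lt_pow_left₀ hax (le_of_lt hα0) (by omega)
      linarith
  have key : ∀ j ∈ Finset.range m,
      x ^ (m - 1) - x ^ j * α ^ (m - 1 - j) ≤ ((m:ℝ) - 1) * x ^ (m - 2) * (x - α) := by
    intro j hj
    have hj' : j < m := Finset.mem_range.mp hj
    have hsp : x ^ (m - 1) = x ^ j * x ^ (m - 1 - j) := by
      rw [← pow_add]; congr 1; omega
    have h1 : x ^ (m - 1) - x ^ j * α ^ (m - 1 - j)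
        = x ^ j * (x ^ (m - 1 - j) - α ^ (m - 1 - j)) := by rw [hsp]; ring
    rw [h1]
    rcases Nat.eq_zero_or_pos (m - 1 - j) with h0 | h0
    · rw [h0]
      simp only [pow_zero, sub_self, mul_zero]
      exact mul_nonneg (mul_nonneg (by linarith) (by positivity)) (le_of_lt hxa)
    · calc x ^ j * (x ^ (m - 1 - j) - α ^ (m - 1 - j))
          ≤ x ^ j * (((m - 1 - j : ℕ) : ℝ) * x ^ (m - 1 - j - 1) * (x - α)) := by
            apply mul_le_mul_of_nonneg_left
              (aux_pow_sub_pow_le hα0 (le_of_lt hax) (m - 1 - j)) (by positivity)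
        _ = ((m - 1 - j : ℕ) : ℝ) * x ^ (j + (m - 1 - j - 1)) * (x - α) := by
            rw [pow_add]; ring
        _ ≤ ((m:ℝ) - 1) * x ^ (m - 2) * (x - α) := by
            have he : j + (m - 1 - j - 1) = m - 2 := by omega
            rw [he]
            have hc : ((m - 1 - j : ℕ) : ℝ) ≤ (m:ℝ) - 1 := by
              have h2 : ((m - 1 - j : ℕ) : ℝ) ≤ ((m - 1 : ℕ) : ℝ) := by
                exact_mod_cast Nat.sub_le _ _
              have h3 : ((m - 1 : ℕ) : ℝ) = (m:ℝ) - 1 := by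
                have : (1:ℕ) ≤ m := by omega
                push_cast [Nat.cast_sub this]
                ring
              linarith
            gcongr
  have hTle : T ≤ (m:ℝ) * (((m:ℝ) - 1) * x ^ (m - 2) * (x - α)) := by
    rw [hTsum]
    calc (∑ j ∈ Finset.range m, (x ^ (m - 1) - x ^ j * α ^ (m - 1 - j)))
        ≤ ∑ _j ∈ Finset.range m, ((m:ℝ) - 1) * x ^ (m - 2) * (x - α) :=
          Finset.sum_le_sum key
      _ = (m:ℝ) * (((m:ℝ) - 1) * x ^ (m - 2) * (x - α)) := by
          rw [Finset.sum_const, Finset.card_range, nsmul_eq_mul]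
  have hx2 : x ^ (m - 2) ≤ (α + 1) ^ (m - 2) :=
    pow_le_pow_left₀ (le_of_lt hx0) hx1 _
  have hKS : T ≤ K * (S * (x - α)) := by
    have step2 : (m:ℝ) * (((m:ℝ) - 1) * x ^ (m - 2) * (x - α))
        ≤ (m:ℝ) * (((m:ℝ) - 1) * (α + 1) ^ (m - 2) * (x - α)) := by
      gcongr <;> linarith
    have h1 : K * (((m:ℝ) * α ^ (m - 1)) * (x - α))
        = (m:ℝ) * (((m:ℝ) - 1) * (α + 1) ^ (m - 2) * (x - α)) := by
      rw [hK]
      have hαne : α ^ (m - 1) ≠ 0 := by positivity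
      field_simp
    have step3 : (m:ℝ) * (((m:ℝ) - 1) * (α + 1) ^ (m - 2) * (x - α))
        ≤ K * (S * (x - α)) := by
      rw [← h1]
      gcongr
    linarith
  have hDpos : 0 < (q:ℝ) ^ 2 * (S * (x - α)) := mul_pos (pow_pos hq0 2) (mul_pos hSpos hxa)
  constructor
  · rw [hV']
    exact div_pos hTpos hDpos
  · rw [hV']
    calc T / ((q:ℝ) ^ 2 * (S * (x - α)))
        ≤ (K * (S * (x - α))) / ((q:ℝ) ^ 2 * (S * (x - α))) := by
          exact div_le_div_of_nonneg_right hKS hDpos.le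
      _ = K / (q:ℝ) ^ 2 := by
          rw [mul_comm K (S * (x - α)), mul_comm ((q:ℝ)^2) (S * (x - α)),
            mul_div_mul_left _ _ (ne_of_gt (mul_pos hSpos hxa : (0:ℝ) < S * (x - α)))]
end
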